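/- arXiv:2306.10437 — 3 statements merged into one kernel-verified Lean document; each statement's English description precedes it below -/
import Mathlib

section
/- Let M ≥ 0 be an integer and s ≥ 0, N ≥ 1 real numbers. Then the number of ordered pairs (i,j) with 0 ≤ i, j < 2^M, i ≠ j, and ‖i/2^M - j/2^M‖ ≤ s/N equals ⌊(s/N)·2^M⌋ · 2^M · 2, provided ⌊(s/N)·2^M⌋ < 2^{M-1} (i.e., the threshold s/N is less than 1/2 up to rounding at resolution 2^{-M}). -/
open scoped Classical

/-- Radical-inverse function in base 2. -/
noncomputable def g2 (n : ℕ) : ℝ :=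
  ∑ j ∈ Finset.range (n + 1), (if n.testBit j then ((2 : ℝ) ^ (j + 1))⁻¹ else 0)

/-- Van der Corput sequence in base 2, indexed from 1, with x₁ = 0. -/
noncomputable def vdc (i : ℕ) : ℝ := g2 (i - 1)

/-- Distance to the nearest integer. -/
noncomputable def nint (x : ℝ) : ℝ := |x - round x|

/-- Finite empiric pair correlation function of the van der Corput sequence in base 2. -/
noncomputable def F (N : ℕ) (s : ℝ) : ℝ :=
  (((Finset.Icc 1 N ×ˢ Finset.Icc 1 N).filter
      (fun p => p.1 ≠ p.2 ∧ nint (vdc p.1 - vdc p.2) ≤ s / N)).card : ℝ) / N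

/-! For `i, j < n`, the difference `i/n - j/n` differs by an integer from `d/n`, where
`d = (n + i - j) % n`, so `‖i/n - j/n‖ = min d (n - d) / n`. For fixed `i`, `j ↦ d` is a
bijection of `{0, …, n-1}` (an involution, in fact), so the number of pairs is `n` times the
number of residues `d ≠ 0` with `min d (n - d) ≤ K := ⌊t n⌋`. These are `1, …, K` and
`n - K, …, n - 1`, which are `2K` residues since `2K < n`. -/

open Finset

lemma nint_add_intCast (x : ℝ) (m : ℤ) : nint (x + m) = nint x := by
  simp only [nint, round_add_intCast, Int.cast_add]
  ring_nf

lemma ZMod.natCast_self_add_sub (n i j : ℕ) (hj : j ≤ n) :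
    ((n + i - j : ℕ) : ZMod n) = i - j := by
  rw [Nat.cast_sub (by omega), Nat.cast_add, ZMod.natCast_self, zero_add]

lemma self_add_sub_self_add_sub_mod_mod (n i j : ℕ) (hj : j < n) :
    (n + i - (n + i - j) % n) % n = j := by
  rw [← ZMod.val_natCast, ZMod.natCast_self_add_sub _ _ _ (Nat.mod_lt _ (by omega)).le,
    ZMod.natCast_mod, ZMod.natCast_self_add_sub _ _ _ hj.le, sub_sub_cancel, ZMod.val_natCast,
    Nat.mod_eq_of_lt hj]

lemma self_add_sub_mod_eq_zero_iff {n i j : ℕ} (hi : i < n) (hj : j < n) :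
    (n + i - j) % n = 0 ↔ i = j := by
  constructor
  · intro h
    have := self_add_sub_self_add_sub_mod_mod n i j hj
    rwa [h, Nat.sub_zero, Nat.add_mod_left, Nat.mod_eq_of_lt hi] at this
  · rintro rfl
    simp

lemma card_filter_range_prod_range_self_add_sub_mod (n : ℕ) (Q : ℕ → Prop) [DecidablePred Q] :
    #{p ∈ range n ×ˢ range n | Q ((n + p.1 - p.2) % n)} = n * #{d ∈ range n | Q d} := by
  rw [← card_range n, ← card_product, card_range]
  refine card_nbij' (fun p => (p.1, (n + p.1 - p.2) % n)) (fun p => (p.1, (n + p.1 - p.2) % n))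
    ?_ ?_ ?_ ?_
  all_goals
    rintro ⟨i, j⟩ hp
    have hn : 0 < n := by simp at hp; omega
    simp_all [self_add_sub_self_add_sub_mod_mod, Nat.mod_lt _ hn]

lemma nint_natCast_div_sub (n i j : ℕ) (hj : j ≤ n) :
    nint ((i : ℝ) / n - j / n) = (min ((n + i - j) % n) (n - (n + i - j) % n) : ℕ) / n := by
  rcases n.eq_zero_or_pos with rfl | hn
  · simp [nint]
  have hsplit : (i : ℝ) / n - j / n = ((n + i - j : ℕ) : ℝ) / n + ((-1 : ℤ) : ℝ) := by
    rw [Nat.cast_sub (by omega)]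
    push_cast
    field_simp
    ring
  rw [hsplit, nint_add_intCast, nint, abs_sub_round_div_natCast_eq]

lemma card_filter_ne_zero_min_sub_le (n K : ℕ) (h : 2 * K < n) :
    #{d ∈ range n | d ≠ 0 ∧ min d (n - d) ≤ K} = 2 * K := by
  have hunion :
      {d ∈ range n | d ≠ 0 ∧ min d (n - d) ≤ K} = Icc 1 K ∪ Icc (n - K) (n - 1) := by
    ext d
    simp only [mem_filter, mem_range, mem_union, mem_Icc]
    omega
  have hdisj : Disjoint (Icc 1 K) (Icc (n - K) (n - 1)) :=
    disjoint_left.2 fun d hd1 hd2 ↦ by rw [mem_Icc] at hd1 hd2; omega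
  rw [hunion, card_union_of_disjoint hdisj, Nat.card_Icc, Nat.card_Icc]
  omega

theorem card_filter_nint_sub_le (n : ℕ) (t : ℝ) (h : 2 * ⌊t * n⌋₊ < n) :
    #{p ∈ range n ×ˢ range n | p.1 ≠ p.2 ∧ nint ((p.1 : ℝ) / n - (p.2 : ℝ) / n) ≤ t}
      = n * (2 * ⌊t * n⌋₊) := by
  have hn : (0 : ℝ) < n := by exact_mod_cast (show 0 < n by omega)
  have hle_floor : ∀ d < n, d ≠ 0 → ((min d (n - d) : ℕ) / n ≤ t ↔ min d (n - d) ≤ ⌊t * n⌋₊) :=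
    fun d hd hd0 ↦ by rw [div_le_iff₀ hn, Nat.le_floor_iff' (by omega)]
  rw [← card_filter_ne_zero_min_sub_le n _ h,
    ← card_filter_range_prod_range_self_add_sub_mod]
  congr 1
  refine filter_congr fun ⟨i, j⟩ hp => ?_
  rw [mem_product, mem_range, mem_range] at hp
  dsimp only at hp ⊢
  rw [nint_natCast_div_sub n i j hp.2.le, ne_eq, ne_eq, self_add_sub_mod_eq_zero_iff hp.1 hp.2]
  exact and_congr_right fun hij ↦
    hle_floor _ (Nat.mod_lt _ (by omega)) (mt (self_add_sub_mod_eq_zero_iff hp.1 hp.2).1 hij)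

theorem stmt4 (M : ℕ) (s N : ℝ) (hs : 0 ≤ s) (hN : 1 ≤ N)
    (h : 2 * ⌊s / N * 2 ^ M⌋ < 2 ^ M) :
    ((((Finset.range (2 ^ M)) ×ˢ (Finset.range (2 ^ M))).filter
        (fun p => p.1 ≠ p.2 ∧ nint ((p.1 : ℝ) / 2 ^ M - (p.2 : ℝ) / 2 ^ M) ≤ s / N)).card : ℤ)
      = ⌊s / N * 2 ^ M⌋ * 2 ^ M * 2 := by
  have hfloor : (⌊s / N * 2 ^ M⌋₊ : ℤ) = ⌊s / N * 2 ^ M⌋ :=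
    Int.natCast_floor_eq_floor (mul_nonneg (div_nonneg hs (by linarith)) (by positivity))
  rw [← hfloor] at h ⊢
  have hcard := card_filter_nint_sub_le (2 ^ M) (s / N) (by exact_mod_cast h)
  push_cast at hcard
  rw [hcard]
  push_cast
  ring
end

section
/- Let (x_n) be the van der Corput sequence in base 2 and let F_N(s) = (1/N)·#{1 ≤ k ≠ l ≤ N : ‖x_k - x_l‖ ≤ s/N}. Then for every real s with 0 ≤ s ≤ 1/2 and every N ∈ ℕ, F_N(s) = 0. -/
open scoped Classical

/-! For `n < 2 ^ M` the radical inverse is `g2 n = bitRev M n / 2 ^ M`, where `bitRev M` reverses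
the `M` low binary digits and is injective on `[0, 2 ^ M)`. Hence distinct points among the first
`2 ^ M` terms of the sequence differ by `a / 2 ^ M` with `0 < |a| < 2 ^ M`, so they are at least
`1 / 2 ^ M` apart modulo 1. Choosing `N ≤ 2 ^ M < 2 N`, this exceeds `1 / (2 N) ≥ s / N`. -/

def bitRev : ℕ → ℕ → ℕ
  | 0, _ => 0
  | M + 1, n => n % 2 * 2 ^ M + bitRev M (n / 2)

lemma bitRev_lt_two_pow (M n : ℕ) : bitRev M n < 2 ^ M := by
  induction M generalizing n with
  | zero => simp [bitRev]
  | succ M ih =>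
    have := ih (n / 2)
    rcases Nat.mod_two_eq_zero_or_one n with h | h <;> simp only [bitRev, h, pow_succ] <;> omega

lemma bitRev_injOn (M : ℕ) : Set.InjOn (bitRev M) (Set.Iio (2 ^ M)) := by
  induction M with
  | zero => intro m hm n hn _; simp_all
  | succ M ih =>
    intro m hm n hn h
    simp only [Set.mem_Iio, pow_succ] at hm hn
    have hm' := bitRev_lt_two_pow M (m / 2)
    have hn' := bitRev_lt_two_pow M (n / 2)
    simp only [bitRev] at h
    have hmod : m % 2 = n % 2 := by
      rcases Nat.mod_two_eq_zero_or_one m with h1 | h1 <;>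
        rcases Nat.mod_two_eq_zero_or_one n with h2 | h2 <;> simp only [h1, h2] at h ⊢ <;> omega
    have hdiv : m / 2 = n / 2 :=
      ih (show m / 2 < 2 ^ M by omega) (show n / 2 < 2 ^ M by omega) (by rw [hmod] at h; omega)
    omega

lemma sum_testBit_eq_bitRev (M n : ℕ) :
    ∑ j ∈ Finset.range M, (if n.testBit j then ((2 : ℝ) ^ (j + 1))⁻¹ else 0)
      = bitRev M n / 2 ^ M := by
  induction M generalizing n with
  | zero => simp [bitRev]
  | succ M ih =>
    have hshift : ∀ j, (if n.testBit (j + 1) then ((2 : ℝ) ^ (j + 1 + 1))⁻¹ else 0)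
        = (if (n / 2).testBit j then ((2 : ℝ) ^ (j + 1))⁻¹ else 0) * 2⁻¹ := fun j => by
      rw [Nat.testBit_succ, pow_succ _ (j + 1), mul_inv, ite_zero_mul]
    rw [Finset.sum_range_succ', Finset.sum_congr rfl fun j _ => hshift j, ← Finset.sum_mul, ih,
      Nat.testBit_zero, bitRev]
    rcases Nat.mod_two_eq_zero_or_one n with h | h <;>
      simp only [h, decide_true, decide_false, zero_ne_one, Bool.false_eq_true, ↓reduceIte,
        Nat.cast_add, Nat.cast_mul, Nat.cast_pow, Nat.cast_zero, Nat.cast_one, Nat.cast_ofNat] <;>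
      field_simp <;> ring

lemma sum_testBit_range_eq_of_lt {n M K : ℕ} (hn : n < 2 ^ M) (hMK : M ≤ K) :
    ∑ j ∈ Finset.range K, (if n.testBit j then ((2 : ℝ) ^ (j + 1))⁻¹ else 0)
      = ∑ j ∈ Finset.range M, (if n.testBit j then ((2 : ℝ) ^ (j + 1))⁻¹ else 0) := by
  refine (Finset.sum_subset (Finset.range_subset_range.2 hMK) fun j _ hj => ?_).symm
  have hj : M ≤ j := by simpa using hj
  simp [Nat.testBit_lt_two_pow (hn.trans_le (Nat.pow_le_pow_right two_pos hj))]

lemma g2_eq_bitRev {n M : ℕ} (hn : n < 2 ^ M) : g2 n = bitRev M n / 2 ^ M := by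
  have hn' : n < 2 ^ (n + 1) :=
    Nat.lt_two_pow_self.trans (Nat.pow_lt_pow_right one_lt_two n.lt_succ_self)
  rw [g2, ← sum_testBit_eq_bitRev,
    ← sum_testBit_range_eq_of_lt hn' (le_max_left (n + 1) M),
    sum_testBit_range_eq_of_lt hn (le_max_right (n + 1) M)]

lemma inv_le_nint_intCast_div (q : ℕ) {a : ℤ} (ha : ¬ (q : ℤ) ∣ a) :
    (q : ℝ)⁻¹ ≤ nint (a / q) := by
  rcases Nat.eq_zero_or_pos q with rfl | hq
  · simp [nint]
  have hq' : (0 : ℝ) < q := by exact_mod_cast hq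
  have hne : a - round ((a : ℝ) / q) * q ≠ 0 := fun h =>
    ha ⟨round ((a : ℝ) / q), by linarith⟩
  have hone : (1 : ℝ) ≤ |((a - round ((a : ℝ) / q) * q : ℤ) : ℝ)| := by
    exact_mod_cast Int.one_le_abs hne
  calc (q : ℝ)⁻¹ ≤ |((a - round ((a : ℝ) / q) * q : ℤ) : ℝ)| / q := by
        rw [inv_eq_one_div]; gcongr
    _ = nint (a / q) := by
        rw [nint, ← abs_of_pos hq', ← abs_div, abs_of_pos hq']
        push_cast
        congr 1
        field_simp

lemma inv_two_pow_le_nint_g2_sub {m n M : ℕ} (hm : m < 2 ^ M) (hn : n < 2 ^ M) (hmn : m ≠ n) :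
    ((2 : ℝ) ^ M)⁻¹ ≤ nint (g2 m - g2 n) := by
  have hm' := bitRev_lt_two_pow M m
  have hn' := bitRev_lt_two_pow M n
  have hndvd : ¬ ((2 ^ M : ℕ) : ℤ) ∣ (bitRev M m - bitRev M n : ℤ) := fun hdvd => by
    have hzero := Int.eq_zero_of_abs_lt_dvd hdvd (by rw [abs_lt]; omega)
    exact hmn (bitRev_injOn M hm hn (by omega))
  have key := inv_le_nint_intCast_div (2 ^ M) hndvd
  push_cast at key
  rwa [g2_eq_bitRev hm, g2_eq_bitRev hn, ← sub_div]

lemma exists_le_two_pow_lt_two_mul {N : ℕ} (hN : 0 < N) :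
    ∃ M, N ≤ 2 ^ M ∧ 2 ^ M < 2 * N := by
  rcases Nat.lt_or_ge 1 N with hN1 | hN1
  · refine ⟨Nat.clog 2 N, Nat.le_pow_clog one_lt_two N, ?_⟩
    have hpred := Nat.pow_pred_clog_lt_self one_lt_two hN1
    have hpos := Nat.clog_pos one_lt_two hN1
    rw [← Nat.succ_pred_eq_of_pos hpos, pow_succ]
    omega
  · exact ⟨0, by omega⟩

theorem stmt7_general (s : ℝ) (hs : s ≤ 1 / 2) (N : ℕ) :
    F N s = 0 := by
  suffices hempty : (Finset.Icc 1 N ×ˢ Finset.Icc 1 N).filter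
      (fun p => p.1 ≠ p.2 ∧ nint (vdc p.1 - vdc p.2) ≤ s / N) = ∅ by
    simp [F, hempty]
  rw [Finset.filter_eq_empty_iff]
  rintro ⟨k, l⟩ hkl ⟨hkl_ne, hclose⟩
  simp only [Finset.mem_product, Finset.mem_Icc] at hkl
  obtain ⟨M, hNM, hMN⟩ := exists_le_two_pow_lt_two_mul (N := N) (by omega)
  have hfar : ((2 : ℝ) ^ M)⁻¹ ≤ nint (vdc k - vdc l) :=
    inv_two_pow_le_nint_g2_sub (by omega) (by omega) (by omega)
  have hN : (0 : ℝ) < N := by exact_mod_cast (show 0 < N by omega)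
  have hsmall : s / N < ((2 : ℝ) ^ M)⁻¹ :=
    calc s / N ≤ 1 / 2 / N := by gcongr
      _ = (2 * (N : ℝ))⁻¹ := by field_simp
      _ < ((2 : ℝ) ^ M)⁻¹ := inv_strictAnti₀ (by positivity) (by exact_mod_cast hMN)
  linarith

theorem stmt7 (s : ℝ) (hs0 : 0 ≤ s) (hs : s ≤ 1 / 2) (N : ℕ) (hN : 0 < N) :
    F N s = 0 :=
  stmt7_general s hs N
end

section
/- For any two distinct elements x_i, x_j (1 ≤ i ≠ j ≤ 2^M) among the first 2^M terms of the van der Corput sequence in base 2, the distance to the nearest integer satisfies ‖x_i - x_j‖ ≥ 2^{-M}. -/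
/-!
Reading the binary digits of `n < 2 ^ M` backwards shows that `g2 n = k / 2 ^ M` for some
`k < 2 ^ M`, and since `g2 n` determines the last binary digit of `n` (it is `1` iff
`g2 n ≥ 1 / 2`), `g2` is injective. Hence for distinct `i, j ≤ 2 ^ M` the difference
`vdc i - vdc j` is `z / 2 ^ M` with `0 < |z| < 2 ^ M`, and such a fraction lies at distance at
least `2⁻ᴹ` from every integer.
-/

open scoped Classical

theorem inv_le_nint_intCast_div_s11 {N : ℕ} {z : ℤ} (hz : ¬ (N : ℤ) ∣ z) :
    (N : ℝ)⁻¹ ≤ nint (z / N) := by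
  rcases Nat.eq_zero_or_pos N with rfl | hN
  · simp [nint]
  replace hN : (0 : ℝ) < N := by exact_mod_cast hN
  set r := round ((z : ℝ) / N)
  have hne : z - r * N ≠ 0 := fun h => hz ⟨r, by linarith⟩
  have hdist : (z : ℝ) / N - r = ((z - r * N : ℤ) : ℝ) / N := by
    push_cast
    field_simp
  have hone : (1 : ℝ) ≤ |((z - r * N : ℤ) : ℝ)| := by exact_mod_cast Int.one_le_abs hne
  rw [nint, hdist, abs_div, abs_of_pos hN, inv_eq_one_div]
  gcongr

theorem g2_eq_sum_range_of_lt {n K : ℕ} (h : n < K) :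
    g2 n = ∑ j ∈ Finset.range K, (if n.testBit j then ((2 : ℝ) ^ (j + 1))⁻¹ else 0) := by
  refine Finset.sum_subset (Finset.range_subset_range.2 h) fun j _ hj => ?_
  have hlt : n < 2 ^ j :=
    (Nat.lt_two_pow_self).trans_le (Nat.pow_le_pow_right two_pos (by simp at hj; omega))
  simp [Nat.testBit_lt_two_pow hlt]

theorem g2_zero : g2 0 = 0 := by
  simp [g2]

theorem g2_eq_mod_two_add (n : ℕ) : g2 n = (n % 2 : ℕ) / 2 + g2 (n / 2) / 2 := by
  rw [g2_eq_sum_range_of_lt (K := n + 2) (by omega), g2_eq_sum_range_of_lt (n := n / 2) (K := n + 1) (by omega),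
    Finset.sum_range_succ', add_comm, Finset.sum_div]
  congr 1
  · rcases Nat.mod_two_eq_zero_or_one n with h | h <;> simp [Nat.testBit_zero, h]
  · refine Finset.sum_congr rfl fun j _ => ?_
    rw [Nat.testBit_add_one]
    split_ifs <;> ring

theorem exists_g2_eq_div_two_pow {M n : ℕ} (hn : n < 2 ^ M) :
    ∃ k : ℕ, k < 2 ^ M ∧ g2 n = k / 2 ^ M := by
  induction M generalizing n with
  | zero => exact ⟨0, by simp, by simp [Nat.lt_one_iff.1 (by simpa using hn), g2_zero]⟩
  | succ M ih =>
    obtain ⟨k, hk, hgk⟩ := ih (n := n / 2) (by omega)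
    refine ⟨n % 2 * 2 ^ M + k, ?_, ?_⟩
    · rcases Nat.mod_two_eq_zero_or_one n with h | h <;> simp [h, pow_succ] <;> omega
    · rw [g2_eq_mod_two_add, hgk, pow_succ]
      push_cast
      field_simp

theorem g2_nonneg (n : ℕ) : 0 ≤ g2 n := by
  obtain ⟨k, -, hk⟩ := exists_g2_eq_div_two_pow (Nat.lt_two_pow_self (n := n))
  rw [hk]
  positivity

theorem g2_lt_one (n : ℕ) : g2 n < 1 := by
  obtain ⟨k, hk, hgk⟩ := exists_g2_eq_div_two_pow (Nat.lt_two_pow_self (n := n))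
  rw [hgk, div_lt_one (by positivity)]
  exact_mod_cast hk

theorem mod_two_eq_of_g2_eq {m n : ℕ} (h : g2 m = g2 n) : m % 2 = n % 2 := by
  rw [g2_eq_mod_two_add m, g2_eq_mod_two_add n] at h
  have := g2_nonneg (m / 2); have := g2_lt_one (m / 2)
  have := g2_nonneg (n / 2); have := g2_lt_one (n / 2)
  rcases Nat.mod_two_eq_zero_or_one m with hm | hm <;>
    rcases Nat.mod_two_eq_zero_or_one n with hn | hn <;> simp only [hm, hn] at h ⊢ <;>
    norm_num at h <;> linarith

theorem g2_injective : Function.Injective g2 := by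
  suffices key : ∀ M m n, m < 2 ^ M → n < 2 ^ M → g2 m = g2 n → m = n from
    fun m n h => key (m + n) m n
      (Nat.lt_two_pow_self.trans_le (Nat.pow_le_pow_right two_pos (by omega)))
      (Nat.lt_two_pow_self.trans_le (Nat.pow_le_pow_right two_pos (by omega))) h
  intro M
  induction M with
  | zero => intro m n hm hn _; simp_all
  | succ M ih =>
    intro m n hm hn h
    have hmod := mod_two_eq_of_g2_eq h
    have hdiv : m / 2 = n / 2 := by
      refine ih _ _ (by omega) (by omega) ?_
      rw [g2_eq_mod_two_add m, g2_eq_mod_two_add n, hmod] at h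
      linarith
    omega

theorem stmt11 (M i j : ℕ) (hi1 : 1 ≤ i) (hi2 : i ≤ 2 ^ M)
    (hj1 : 1 ≤ j) (hj2 : j ≤ 2 ^ M) (hij : i ≠ j) :
    ((2 : ℝ) ^ M)⁻¹ ≤ nint (vdc i - vdc j) := by
  obtain ⟨a, ha, hga⟩ := exists_g2_eq_div_two_pow (M := M) (n := i - 1) (by omega)
  obtain ⟨b, hb, hgb⟩ := exists_g2_eq_div_two_pow (M := M) (n := j - 1) (by omega)
  have hab : a ≠ b := fun h => hij (by subst h; have := g2_injective (hga.trans hgb.symm); omega)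
  have hndvd : ¬ ((2 ^ M : ℕ) : ℤ) ∣ (a - b : ℤ) := fun hdvd =>
    hab (by have := Int.eq_zero_of_abs_lt_dvd hdvd (by rw [abs_lt]; omega); omega)
  have hdiff : vdc i - vdc j = ((a - b : ℤ) : ℝ) / ((2 ^ M : ℕ) : ℝ) := by
    rw [vdc, vdc, hga, hgb]
    push_cast
    ring
  simpa [hdiff] using inv_le_nint_intCast_div_s11 hndvd
end
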